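/- arXiv:1903.05811 — 2 statements merged into one kernel-verified Lean document; each statement's English description precedes it below -/
import Mathlib

section
/- Let ℓ be a positive even integer and E_ℓ(t) = Σ_{s=0}^{ℓ} t^s/s!. Then for every real t with t ≤ ℓ/e², one has e^t ≤ (1 + e^{-ℓ/2})·E_ℓ(t). -/
/-!
For `g(t) = e^{-t} E_n(t)`, where `E_n = truncExp n`, one has `g'(t) = -e^{-t} t^n / n!`.
When `n` is even, `g` is antitone, so `g(t) ≥ g(0) = 1` for `t ≤ 0`, i.e. `e^t ≤ E_n(t)`.
For `t ≥ 0`, adding `t^{n+1}/(n+1)!` to `g` makes the derivative `t^n/n! (1 - e^{-t}) ≥ 0`,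
whence `e^t (1 - t^{n+1}/(n+1)!) ≤ E_n(t)`. With `n = ℓ` and `t ≤ (ℓ+1)/e²`, the crude
Stirling bound `m^m/m! ≤ e^m` makes the remainder at most `e^{-(ℓ+1)} = e^{-1} (e^{-ℓ/2})²`,
and `(1 + δ)(1 - δ²/e) ≥ 1` for `0 < δ ≤ 1`.
-/

open Real Finset Nat

noncomputable def truncExp (n : ℕ) (t : ℝ) : ℝ := ∑ s ∈ range (n + 1), t ^ s / s !

lemma truncExp_zero (t : ℝ) : truncExp 0 t = 1 := by simp [truncExp]

lemma truncExp_apply_zero (n : ℕ) : truncExp n 0 = 1 := by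
  simp [truncExp, sum_range_succ']

lemma truncExp_succ (n : ℕ) (t : ℝ) :
    truncExp (n + 1) t = truncExp n t + t ^ (n + 1) / (n + 1)! :=
  sum_range_succ _ _

lemma hasDerivAt_pow_succ_div_factorial (n : ℕ) (t : ℝ) :
    HasDerivAt (fun x : ℝ => x ^ (n + 1) / (n + 1)!) (t ^ n / n !) t := by
  refine ((hasDerivAt_pow (n + 1) t).div_const _).congr_deriv ?_
  rw [factorial_succ, cast_mul]
  field_simp
  push_cast
  ring

lemma hasDerivAt_truncExp (n : ℕ) (t : ℝ) :
    HasDerivAt (truncExp n) (truncExp n t - t ^ n / n !) t := by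
  induction n with
  | zero => simpa [funext truncExp_zero] using hasDerivAt_const t (1 : ℝ)
  | succ n ih =>
    rw [funext (truncExp_succ n)]
    exact (ih.add (hasDerivAt_pow_succ_div_factorial n t)).congr_deriv (by ring)

lemma hasDerivAt_exp_neg_mul_truncExp (n : ℕ) (t : ℝ) :
    HasDerivAt (fun x => exp (-x) * truncExp n x) (-(exp (-t) * (t ^ n / n !))) t :=
  ((hasDerivAt_neg t).exp.mul (hasDerivAt_truncExp n t)).congr_deriv (by ring)

lemma exp_le_truncExp_of_nonpos {n : ℕ} (hn : Even n) {t : ℝ} (ht : t ≤ 0) :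
    exp t ≤ truncExp n t := by
  have hanti : Antitone (fun x => exp (-x) * truncExp n x) :=
    antitone_of_hasDerivAt_nonpos (hasDerivAt_exp_neg_mul_truncExp n) fun x => by
      have := hn.pow_nonneg x
      simp only [Pi.zero_apply, neg_nonpos]
      positivity
  have h : exp (-0) * truncExp n 0 ≤ exp (-t) * truncExp n t := hanti ht
  rw [neg_zero, exp_zero, truncExp_apply_zero, one_mul, exp_neg, ← div_eq_inv_mul,
    one_le_div (exp_pos t)] at h
  exact h

lemma exp_mul_one_sub_le_truncExp (n : ℕ) {t : ℝ} (ht : 0 ≤ t) :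
    exp t * (1 - t ^ (n + 1) / (n + 1)!) ≤ truncExp n t := by
  have hφ (x : ℝ) : HasDerivAt (fun x => exp (-x) * truncExp n x + x ^ (n + 1) / (n + 1)!)
      (x ^ n / n ! * (1 - exp (-x))) x :=
    ((hasDerivAt_exp_neg_mul_truncExp n x).add
      (hasDerivAt_pow_succ_div_factorial n x)).congr_deriv (by ring)
  have hmono : MonotoneOn (fun x => exp (-x) * truncExp n x + x ^ (n + 1) / (n + 1)!)
      (Set.Ici 0) :=
    monotoneOn_of_hasDerivWithinAt_nonneg (convex_Ici 0)
      (fun x _ => (hφ x).continuousAt.continuousWithinAt)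
      (fun x _ => (hφ x).hasDerivWithinAt) fun x hx => by
        rw [interior_Ici, Set.mem_Ioi] at hx
        have : 0 ≤ 1 - exp (-x) := sub_nonneg.2 (exp_le_one_iff.2 (by linarith))
        positivity
  have h := hmono Set.self_mem_Ici ht ht
  simp only [neg_zero, exp_zero, truncExp_apply_zero, one_mul, ne_eq, succ_ne_zero,
    not_false_eq_true, zero_pow, zero_div, add_zero] at h
  calc exp t * (1 - t ^ (n + 1) / (n + 1)!) ≤ exp t * (exp (-t) * truncExp n t) := by
        gcongr; linarith
    _ = truncExp n t := by rw [← mul_assoc, ← exp_add, add_neg_cancel, exp_zero, one_mul]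

lemma pow_div_factorial_le_exp_neg {n : ℕ} {t : ℝ} (ht₀ : 0 ≤ t)
    (ht : t ≤ n / exp 1 ^ 2) :
    t ^ n / n ! ≤ exp (-n) :=
  calc t ^ n / n ! ≤ (n / exp 1 ^ 2) ^ n / n ! := by gcongr
    _ = (n ^ n / n !) / exp n ^ 2 := by
      rw [div_pow, ← pow_mul, mul_comm, pow_mul, exp_one_pow]; ring
    _ ≤ exp n / exp n ^ 2 := by gcongr; exact Real.pow_div_factorial_le_exp _ (cast_nonneg n) n
    _ = exp (-n) := by rw [exp_neg]; field_simp

lemma one_le_one_add_exp_neg_half_mul_one_sub_exp_neg {x : ℝ} (hx : 0 ≤ x) :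
    1 ≤ (1 + exp (-x / 2)) * (1 - exp (-(x + 1))) := by
  have hsplit : exp (-(x + 1)) = exp (-x / 2) ^ 2 * exp (-1) := by
    rw [← exp_nat_mul, ← exp_add]; push_cast; ring_nf
  have hδ₀ := exp_pos (-x / 2)
  have hδ₁ : exp (-x / 2) ≤ 1 := exp_le_one_iff.2 (by linarith)
  have hu₀ := exp_pos (-1)
  have hu₁ : exp (-1) ≤ 1 / 2 := by
    rw [exp_neg, inv_le_comm₀ (exp_pos 1) (by norm_num)]
    linarith [add_one_le_exp (1 : ℝ)]
  rw [hsplit]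
  nlinarith [mul_nonneg hδ₀.le (sub_nonneg.2 hδ₁), mul_pos hδ₀ hu₀]

theorem exp_le_truncated_exp_general (ℓ : ℕ) (heven : Even ℓ) (t : ℝ)
    (ht : t ≤ (ℓ : ℝ) / (Real.exp 1) ^ 2) :
    Real.exp t ≤ (1 + Real.exp (-(ℓ : ℝ) / 2)) *
      ∑ s ∈ Finset.range (ℓ + 1), t ^ s / (Nat.factorial s : ℝ) := by
  change exp t ≤ (1 + exp (-(ℓ : ℝ) / 2)) * truncExp ℓ t
  rcases le_total t 0 with ht₀ | ht₀
  · have h := exp_le_truncExp_of_nonpos heven ht₀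
    exact h.trans (le_mul_of_one_le_left ((exp_pos t).le.trans h)
      (le_add_of_nonneg_right (exp_pos _).le))
  · have hrem : t ^ (ℓ + 1) / (ℓ + 1)! ≤ exp (-(ℓ + 1 : ℕ)) :=
      pow_div_factorial_le_exp_neg ht₀ (ht.trans (by gcongr; simp))
    push_cast at hrem
    calc exp t ≤ (1 + exp (-(ℓ : ℝ) / 2)) * (exp t * (1 - exp (-(ℓ + 1)))) := by
          rw [mul_left_comm]
          exact le_mul_of_one_le_right (exp_pos t).le
            (one_le_one_add_exp_neg_half_mul_one_sub_exp_neg (cast_nonneg ℓ))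
      _ ≤ (1 + exp (-(ℓ : ℝ) / 2)) * (exp t * (1 - t ^ (ℓ + 1) / (ℓ + 1)!)) := by gcongr
      _ ≤ (1 + exp (-(ℓ : ℝ) / 2)) * truncExp ℓ t := by
          gcongr; exact exp_mul_one_sub_le_truncExp ℓ ht₀

/-- For a positive even integer `ℓ` and `E_ℓ(t) = ∑_{s=0}^{ℓ} t^s/s!`, if
`t ≤ ℓ/e²` then `e^t ≤ (1 + e^{-ℓ/2})·E_ℓ(t)`. -/
theorem exp_le_truncated_exp (ℓ : ℕ) (hpos : 0 < ℓ) (heven : Even ℓ) (t : ℝ)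
    (ht : t ≤ (ℓ : ℝ) / (Real.exp 1) ^ 2) :
    Real.exp t ≤ (1 + Real.exp (-(ℓ : ℝ) / 2)) *
      ∑ s ∈ Finset.range (ℓ + 1), t ^ s / (Nat.factorial s : ℝ) :=
  exp_le_truncated_exp_general ℓ heven t ht
end

section
/- For any real Dirichlet-polynomial-type coefficients: if F : ℝ → ℂ is a Schwartz function and n is an odd positive integer, then Σ_{d odd} (d/n)·F(d) = (1/(2n))·(2/n)·Σ_{ℓ ∈ ℤ} (−1)^ℓ·G_ℓ(n)·F̃(ℓ/(2n)), where G_ℓ(n) = ((1−i)/2 + (−1/n)(1+i)/2)·Σ_{a mod n} (a/n)e(aℓ/n) and F̃(λ) = ∫_ℝ (cos(2πλξ) + sin(2πλξ))F(ξ)dξ. -/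
open MeasureTheory

/-- `e(x) = e^{2πix}`. -/
noncomputable def e2πi (x : ℝ) : ℂ := Complex.exp (2 * Real.pi * Complex.I * x)

/-- The Gauss-type sum
`G_ℓ(n) = ((1−i)/2 + (−1/n)(1+i)/2)·∑_{a mod n} (a/n)e(aℓ/n)`. -/
noncomputable def gaussG (ℓ : ℤ) (n : ℕ) : ℂ :=
  ((1 - Complex.I) / 2 + (jacobiSym (-1) n : ℂ) * (1 + Complex.I) / 2) *
    ∑ a ∈ Finset.range n, (jacobiSym (a : ℤ) n : ℂ) * e2πi ((a : ℝ) * ℓ / n)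

/-- The transform `F̃(λ) = ∫_ℝ (cos(2πλξ) + sin(2πλξ))F(ξ)dξ`. -/
noncomputable def cosSinTransform (F : SchwartzMap ℝ ℂ) (lam : ℝ) : ℂ :=
  ∫ ξ : ℝ, ((Real.cos (2 * Real.pi * lam * ξ) +
      Real.sin (2 * Real.pi * lam * ξ) : ℝ) : ℂ) * F ξ

/-!
Since `n` is odd, the odd integers are exactly the `2k + n`, and `(2k + n | n) = (2 | n) (k | n)`.
Splitting `k` into residue classes `r` mod `n` and applying Poisson summation to each progression
`2r + n + 2nℤ` turns the left side into `(2 | n) / (2n) ∑_ℓ (-1)^ℓ τ_ℓ(n) F̂(ℓ / 2n)`, where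
`τ_ℓ(n) = ∑_{a mod n} (a | n) e(aℓ/n)`. On the right, `F̃(λ) = (1-i)/2 F̂(-λ) + (1+i)/2 F̂(λ)` and
`τ_{-ℓ}(n) = ε τ_ℓ(n)` with `ε = (-1 | n) = ±1`, so substituting `ℓ ↦ -ℓ` in the `F̂(-λ)` half
collapses the series to the same one, because `((1-i)/2 + ε(1+i)/2) (ε(1-i)/2 + (1+i)/2) = 1`.
-/

section

open Finset Complex FourierTransform
open scoped Real

lemma e2πi_add (x y : ℝ) : e2πi (x + y) = e2πi x * e2πi y := by
  rw [e2πi, e2πi, e2πi, ← exp_add]; push_cast; ring_nf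

lemma e2πi_intCast (k : ℤ) : e2πi k = 1 := by
  rw [e2πi, show 2 * π * I * (k : ℝ) = k * (2 * π * I) by push_cast; ring]
  exact exp_int_mul_two_pi_mul_I k

lemma e2πi_intCast_div_two (k : ℤ) : e2πi (k / 2) = (-1) ^ k := by
  rw [e2πi, show 2 * π * I * ((k / 2 : ℝ) : ℂ) = k * (π * I) by push_cast; ring,
    exp_int_mul, exp_pi_mul_I]

lemma Function.Periodic.sum_range_comp_neg {M : Type*} [AddCommMonoid M] {f : ℤ → M} {n : ℕ}
    (hf : Function.Periodic f n) : ∑ a ∈ range n, f (-a) = ∑ a ∈ range n, f a := by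
  have hshift : ∑ a ∈ range n, f (a + 1) = ∑ a ∈ range n, f a := by
    cases n with
    | zero => simp
    | succ k =>
      rw [sum_range_succ, sum_range_succ' (fun a : ℕ ↦ f a), Nat.cast_zero, ← hf.eq]
      push_cast
      rfl
  rw [← hshift, ← sum_range_reflect]
  refine sum_congr rfl fun a ha ↦ ?_
  rw [← hf]
  congr 1
  have := mem_range.1 ha
  omega

lemma tsum_int_eq_sum_range_tsum {E : Type*} [NormedAddCommGroup E] [CompleteSpace E]
    {g : ℤ → E} (hg : Summable g) {N : ℕ} (hN : N ≠ 0) :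
    ∑' k, g k = ∑ r ∈ range N, ∑' q : ℤ, g (q * N + r) := by
  have : NeZero N := ⟨hN⟩
  let e : Fin N × ℤ ≃ ℤ := (Equiv.prodComm _ _).trans (Int.divModEquiv N).symm
  have he : Summable fun p ↦ g (e p) := e.summable_iff.2 hg
  rw [← e.tsum_eq, he.tsum_prod' fun r ↦ he.comp_injective (Prod.mk_right_injective r),
    tsum_fintype, ← Fin.sum_univ_eq_sum_range (fun r ↦ ∑' q : ℤ, g (q * N + r))]
  rfl

lemma norm_jacobiSym_le_one (a : ℤ) (b : ℕ) : ‖(jacobiSym a b : ℂ)‖ ≤ 1 := by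
  rcases jacobiSym.trichotomy a b with h | h | h <;> simp [h]

lemma jacobiSym_mul_add_self (q r : ℤ) (n : ℕ) : jacobiSym (q * n + r) n = jacobiSym r n :=
  jacobiSym.mod_left' (by simp)

lemma jacobiSym_two_mul_add_self (k : ℤ) (n : ℕ) :
    jacobiSym (2 * k + n) n = jacobiSym 2 n * jacobiSym k n := by
  rw [← jacobiSym.mul_left]
  exact jacobiSym.mod_left' (by simp)

noncomputable def quadGaussSum (ℓ : ℤ) (n : ℕ) : ℂ :=
  ∑ a ∈ range n, (jacobiSym a n : ℂ) * e2πi (a * ℓ / n)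

lemma gaussG_eq_mul_quadGaussSum (ℓ : ℤ) (n : ℕ) :
    gaussG ℓ n = ((1 - I) / 2 + jacobiSym (-1) n * (1 + I) / 2) * quadGaussSum ℓ n :=
  rfl

lemma quadGaussSum_neg (ℓ : ℤ) (n : ℕ) :
    quadGaussSum (-ℓ) n = jacobiSym (-1) n * quadGaussSum ℓ n := by
  obtain rfl | hn := eq_or_ne n 0
  · simp [quadGaussSum]
  let g : ℤ → ℂ := fun b ↦ jacobiSym (-b) n * e2πi (b * ℓ / n)
  have hg : Function.Periodic g n := fun b ↦ by
    have hJ : jacobiSym (-(b + n)) n = jacobiSym (-b) n := jacobiSym.mod_left' (by simp)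
    have he : ((b + n : ℤ) : ℝ) * ℓ / n = b * ℓ / n + ℓ := by push_cast; field_simp
    simp only [g, hJ, he, e2πi_add, e2πi_intCast, mul_one]
  calc quadGaussSum (-ℓ) n = ∑ a ∈ range n, g (-a) := by
        refine sum_congr rfl fun a _ ↦ ?_
        simp only [g, neg_neg, Int.cast_neg, Int.cast_natCast]
        ring_nf
    _ = ∑ a ∈ range n, g a := hg.sum_range_comp_neg
    _ = jacobiSym (-1) n * quadGaussSum ℓ n := by
        rw [quadGaussSum, mul_sum]
        refine sum_congr rfl fun a _ ↦ ?_
        simp only [g, neg_eq_neg_one_mul (a : ℤ), jacobiSym.mul_left, Int.cast_mul,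
          Int.cast_natCast]
        ring

lemma sum_jacobiSym_mul_e2πi_two_mul_add (ℓ : ℤ) (n : ℕ) :
    ∑ r ∈ range n, (jacobiSym r n : ℂ) * e2πi (ℓ * (2 * r + n) / (2 * n))
      = (-1) ^ ℓ * quadGaussSum ℓ n := by
  rw [quadGaussSum, mul_sum]
  refine sum_congr rfl fun r hr ↦ ?_
  have hn : (n : ℝ) ≠ 0 := Nat.cast_ne_zero.2 (ne_zero_of_lt (mem_range.1 hr))
  rw [show (ℓ : ℝ) * (2 * r + n) / (2 * n) = ℓ / 2 + r * ℓ / n by field_simp; ring,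
    e2πi_add, e2πi_intCast_div_two]
  ring

lemma Real.fourier_comp_mul_left {E : Type*} [NormedAddCommGroup E] [NormedSpace ℂ E]
    (f : ℝ → E) {c : ℝ} (hc : c ≠ 0) (ξ : ℝ) :
    𝓕 (fun x ↦ f (c * x)) ξ = |c⁻¹| • 𝓕 f (c⁻¹ * ξ) := by
  simp only [Real.fourier_real_eq]
  rw [← Measure.integral_comp_mul_left _ c]
  congr! 4 with x
  field_simp

lemma SchwartzMap.summable_norm_intCast {E : Type*} [NormedAddCommGroup E] [NormedSpace ℝ E]
    (f : SchwartzMap ℝ E) : Summable fun n : ℤ ↦ ‖f n‖ :=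
  summable_of_isBigO (Real.summable_abs_int_rpow one_lt_two)
    ((f.isBigO_cocompact_rpow (-2)).norm_left.comp_tendsto Int.tendsto_coe_cofinite)

theorem SchwartzMap.hasSum_poisson_progression (f : SchwartzMap ℝ ℂ) {N : ℝ} (hN : 0 < N)
    (x : ℝ) :
    HasSum (fun ℓ : ℤ ↦ N⁻¹ * 𝓕 f (ℓ / N) * e2πi (ℓ * x / N)) (∑' m : ℤ, f (x + N * m)) := by
  obtain ⟨g, hg⟩ : ∃ g : SchwartzMap ℝ ℂ, ∀ y, g y = f (N * y) :=
    ⟨compCLMOfContinuousLinearEquiv ℝ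
      (LinearEquiv.smulOfNeZero ℝ ℝ N hN.ne').toContinuousLinearEquiv f, fun y ↦ by simp⟩
  have hFg (ξ : ℝ) : 𝓕 g ξ = N⁻¹ * 𝓕 f (ξ / N) := by
    rw [fourier_coe, show (g : ℝ → ℂ) = fun y ↦ f (N * y) from funext hg,
      Real.fourier_comp_mul_left _ hN.ne', abs_inv, abs_of_pos hN, Complex.real_smul,
      inv_mul_eq_div]
    push_cast; rfl
  have hsum : Summable fun ℓ : ℤ ↦ 𝓕 g ℓ * fourier ℓ ((x / N : ℝ) : UnitAddCircle) :=
    (𝓕 g).summable_norm_intCast.of_norm_bounded fun ℓ ↦ by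
      rw [norm_mul]
      exact mul_le_of_le_one_right (norm_nonneg _)
        ((ContinuousMap.norm_coe_le_norm _ _).trans_eq (fourier_norm ℓ))
  convert hsum.hasSum using 1
  · ext ℓ
    rw [fourier_coe, hFg, fourier_coe_apply, e2πi]
    congr 2
    push_cast; ring
  · rw [← g.tsum_eq_tsum_fourier (x / N)]
    congr! 2 with m
    rw [hg]; congr 1; field_simp

lemma cosSinTransform_eq_fourier (F : SchwartzMap ℝ ℂ) (lam : ℝ) :
    cosSinTransform F lam = (1 - I) / 2 * 𝓕 F (-lam) + (1 + I) / 2 * 𝓕 F lam := by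
  have hint (w : ℝ) : Integrable fun v : ℝ ↦ 𝐞 (-(v * w)) • F v := by
    simpa [mul_comm] using (Real.fourierIntegral_convergent_iff w).2 F.integrable
  rw [SchwartzMap.fourier_coe, Real.fourier_real_eq, Real.fourier_real_eq,
    ← integral_const_mul, ← integral_const_mul, ← integral_add ((hint _).const_mul _)
    ((hint _).const_mul _), cosSinTransform]
  congr 1 with ξ
  simp only [Circle.smul_def, Real.fourierChar_apply, smul_eq_mul]
  rw [show 2 * π * -(ξ * -lam) = 2 * π * lam * ξ by ring,
    show 2 * π * -(ξ * lam) = -(2 * π * lam * ξ) by ring]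
  push_cast
  rw [exp_mul_I, exp_mul_I, cos_neg, sin_neg]
  linear_combination (sin (2 * π * lam * ξ)) * F ξ * I_sq

lemma tsum_odd_jacobiSym_mul (F : SchwartzMap ℝ ℂ) {n : ℕ} (hn : Odd n) :
    ∑' d : ℤ, (if Odd d then (jacobiSym d n : ℂ) * F d else 0)
      = jacobiSym 2 n * ∑ r ∈ range n, jacobiSym r n * ∑' q : ℤ, F (2 * r + n + 2 * n * q) := by
  have hodd : ∀ k : ℤ, Odd (2 * k + n) := fun k ↦ (even_two_mul k).add_odd hn.natCast
  have hinj : Function.Injective fun k : ℤ ↦ 2 * k + n := fun k k' h ↦ by simpa using h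
  have hsupp : Function.support (fun d : ℤ ↦ if Odd d then (jacobiSym d n : ℂ) * F d else 0)
      ⊆ Set.range fun k : ℤ ↦ 2 * k + n := fun d hd ↦ by
    have hd : Odd d := by_contra fun h ↦ hd (if_neg h)
    obtain ⟨k, hk⟩ := hd.sub_odd hn.natCast
    exact ⟨k, by dsimp only; omega⟩
  rw [← hinj.tsum_eq hsupp]
  have hsum : Summable fun k : ℤ ↦ (jacobiSym k n : ℂ) * F (2 * k + n) := by
    refine (F.summable_norm_intCast.comp_injective hinj).of_norm_bounded fun k ↦ ?_
    simpa [norm_mul] using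
      mul_le_of_le_one_left (norm_nonneg (F (2 * k + n))) (norm_jacobiSym_le_one k n)
  simp only [hodd, if_true, jacobiSym_two_mul_add_self, Int.cast_mul, Int.cast_add,
    Int.cast_ofNat, Int.cast_natCast, mul_assoc]
  rw [tsum_mul_left, tsum_int_eq_sum_range_tsum hsum hn.pos.ne']
  congr 1
  refine sum_congr rfl fun r _ ↦ ?_
  rw [← tsum_mul_left]
  congr 1 with q
  rw [jacobiSym_mul_add_self]
  push_cast
  ring_nf

theorem hasSum_tsum_odd_jacobiSym_mul (F : SchwartzMap ℝ ℂ) {n : ℕ} (hn : Odd n) :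
    HasSum (fun ℓ : ℤ ↦ jacobiSym 2 n / (2 * n) * ((-1) ^ ℓ * quadGaussSum ℓ n) * 𝓕 F (ℓ / (2 * n)))
      (∑' d : ℤ, if Odd d then (jacobiSym d n : ℂ) * F d else 0) := by
  have h2n : (0 : ℝ) < 2 * n := by have := hn.pos; positivity
  rw [tsum_odd_jacobiSym_mul F hn]
  refine ((hasSum_sum fun (r : ℕ) _ ↦ (F.hasSum_poisson_progression h2n (2 * r + n)).mul_left
    (jacobiSym r n : ℂ)).mul_left (jacobiSym 2 n : ℂ)).congr_fun fun ℓ ↦ ?_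
  rw [← sum_jacobiSym_mul_e2πi_two_mul_add]
  simp only [mul_sum, sum_mul]
  refine sum_congr rfl fun r _ ↦ ?_
  push_cast
  ring

theorem HasSum.symmetrize_cosSin {T ψ : ℤ → ℂ} {ε S : ℂ} (hε : ε = 1 ∨ ε = -1)
    (hT : ∀ ℓ, T (-ℓ) = ε * T ℓ) (h : HasSum (fun ℓ ↦ T ℓ * ψ ℓ) S) :
    HasSum (fun ℓ ↦ ((1 - I) / 2 + ε * (1 + I) / 2) * T ℓ *
      ((1 - I) / 2 * ψ (-ℓ) + (1 + I) / 2 * ψ ℓ)) S := by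
  have hneg : HasSum (fun ℓ ↦ ε * T ℓ * ψ (-ℓ)) S := by
    refine ((Equiv.neg ℤ).hasSum_iff.2 h).congr_fun fun ℓ ↦ ?_
    simp [hT]
  set κ := (1 - I) / 2 + ε * (1 + I) / 2
  have hκ : κ * ε * ((1 - I) / 2) + κ * ((1 + I) / 2) = 1 := by
    rcases hε with rfl | rfl
    · ring
    · linear_combination -I_sq
  rw [show S = κ * ε * ((1 - I) / 2) * S + κ * ((1 + I) / 2) * S by
    rw [← add_mul, hκ, one_mul]]
  refine ((hneg.mul_left (κ * ε * ((1 - I) / 2))).add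
    (h.mul_left (κ * ((1 + I) / 2)))).congr_fun fun ℓ ↦ ?_
  have hε2 : ε ^ 2 = 1 := by rcases hε with rfl | rfl <;> norm_num
  linear_combination -(κ * T ℓ * ψ (-ℓ) * (1 - I) / 2) * hε2

end

open Classical in
theorem poisson_summation_quadratic_general (F : SchwartzMap ℝ ℂ) (n : ℕ)
    (hn : Odd n) :
    ∑' d : ℤ, (if Odd d then (jacobiSym d n : ℂ) * F (d : ℝ) else 0) =
      (1 / (2 * (n : ℂ))) * (jacobiSym 2 n : ℂ) *
        ∑' ℓ : ℤ, (-1 : ℂ) ^ ℓ * gaussG ℓ n *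
          cosSinTransform F ((ℓ : ℝ) / (2 * n)) := by
  have hε : (jacobiSym (-1) n : ℂ) = 1 ∨ (jacobiSym (-1) n : ℂ) = -1 := by
    rcases jacobiSym.eq_one_or_neg_one (a := -1) (b := n) (by simp) with h | h <;> simp [h]
  have hT (ℓ : ℤ) : jacobiSym 2 n / (2 * n) * ((-1) ^ (-ℓ) * quadGaussSum (-ℓ) n)
      = jacobiSym (-1) n * (jacobiSym 2 n / (2 * n) * ((-1) ^ ℓ * quadGaussSum ℓ n) : ℂ) := by
    rw [quadGaussSum_neg, zpow_neg, ← inv_zpow, inv_neg, inv_one]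
    ring
  have hS := (hasSum_tsum_odd_jacobiSym_mul F hn).symmetrize_cosSin hε hT
  rw [← hS.tsum_eq, ← tsum_mul_left]
  congr 1 with ℓ
  rw [gaussG_eq_mul_quadGaussSum, cosSinTransform_eq_fourier, Int.cast_neg, neg_div]
  ring

open Classical in
/-- Poisson summation for quadratic characters: for a Schwartz function `F`
and odd positive `n`,
`∑_{d odd} (d/n)F(d) = (1/(2n))(2/n)∑_{ℓ ∈ ℤ} (−1)^ℓ G_ℓ(n) F̃(ℓ/(2n))`. -/
theorem poisson_summation_quadratic (F : SchwartzMap ℝ ℂ) (n : ℕ)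
    (hn : Odd n) (hpos : 0 < n) :
    ∑' d : ℤ, (if Odd d then (jacobiSym d n : ℂ) * F (d : ℝ) else 0) =
      (1 / (2 * (n : ℂ))) * (jacobiSym 2 n : ℂ) *
        ∑' ℓ : ℤ, (-1 : ℂ) ^ ℓ * gaussG ℓ n *
          cosSinTransform F ((ℓ : ℝ) / (2 * n)) :=
  poisson_summation_quadratic_general F n hn
end
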